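/- Let T be a finite tree with diam(T) = d ≥ 2 and let D = v_0, v_1, …, v_d be a diametral path of T. If the vertex v_1 (adjacent to the endpoint v_0 of D) has at least two distinct neighbors not lying on D (so v_1 has degree at least 4), then Γ_b(T) > diam(T); in particular T is not diametrical. -/

import Mathlib

open SimpleGraph Finset

/-- `S` is a dominating set of `G`: every vertex is in `S` or adjacent to a vertex of `S`. -/
def Dominates {V : Type*} (G : SimpleGraph V) (S : Finset V) : Prop :=
  ∀ v : V, v ∈ S ∨ ∃ u ∈ S, G.Adj v u

/-- `S` is a minimal dominating set: it dominates and no proper subset dominates. -/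
def MinimalDominating {V : Type*} (G : SimpleGraph V) (S : Finset V) : Prop :=
  Dominates G S ∧ ∀ S' : Finset V, S' ⊂ S → ¬ Dominates G S'

/-- The upper domination number `Γ(G)`: maximum cardinality of a minimal dominating set. -/
noncomputable def upperDomination {V : Type*} (G : SimpleGraph V) : ℕ :=
  sSup {k : ℕ | ∃ S : Finset V, MinimalDominating G S ∧ S.card = k}

/-- The domination number `γ(G)`: minimum cardinality of a dominating set. -/
noncomputable def domNumber {V : Type*} (G : SimpleGraph V) : ℕ :=
  sInf {k : ℕ | ∃ S : Finset V, Dominates G S ∧ S.card = k}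

/-- The eccentricity of `v` : maximum distance to any other vertex. -/
noncomputable def eccent {V : Type*} [Fintype V] (G : SimpleGraph V) (v : V) : ℕ :=
  Finset.univ.sup (fun u => G.dist v u)

/-- The diameter of `G` : maximum eccentricity. -/
noncomputable def gDiam {V : Type*} [Fintype V] (G : SimpleGraph V) : ℕ :=
  Finset.univ.sup (fun v => eccent G v)

/-- A broadcast on `G`: `f v ≤ e(v)` for all `v`. -/
def IsBroadcast {V : Type*} [Fintype V] (G : SimpleGraph V) (f : V → ℕ) : Prop :=
  ∀ v : V, f v ≤ _root_.eccent G v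

/-- A broadcast `f` dominates `G` if every vertex hears some broadcasting vertex. -/
def BroadcastDominates {V : Type*} (G : SimpleGraph V) (f : V → ℕ) : Prop :=
  ∀ u : V, ∃ v : V, 1 ≤ f v ∧ G.dist u v ≤ f v

/-- A minimal dominating broadcast: no broadcast `g ≤ f` with `g ≠ f` dominates `G`. -/
def MinimalDominatingBroadcast {V : Type*} [Fintype V] (G : SimpleGraph V) (f : V → ℕ) : Prop :=
  IsBroadcast G f ∧ BroadcastDominates G f ∧
    ∀ g : V → ℕ, IsBroadcast G g → g ≤ f → g ≠ f → ¬ BroadcastDominates G g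

/-- The cost of a broadcast. -/
def cost {V : Type*} [Fintype V] (f : V → ℕ) : ℕ := ∑ v, f v

/-- The upper broadcast domination number `Γ_b(G)`. -/
noncomputable def upperBroadcast {V : Type*} [Fintype V] (G : SimpleGraph V) : ℕ :=
  sSup {k : ℕ | ∃ f : V → ℕ, MinimalDominatingBroadcast G f ∧ cost f = k}

/-- The broadcast domination number `γ_b(G)`. -/
noncomputable def broadcastDomNumber {V : Type*} [Fintype V] (G : SimpleGraph V) : ℕ :=
  sInf {k : ℕ | ∃ f : V → ℕ, IsBroadcast G f ∧ BroadcastDominates G f ∧ cost f = k}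

/-!
Let `v_d` broadcast with strength `d - 1` and every vertex at distance `d` from `v_d` with
strength `1`. Any dominating broadcast below this one keeps every such farthest vertex at
strength `1`, since in a tree no two of them are adjacent, and keeps strength at least `d - 2`
at `v_d`, since nothing else reaches `v_2`. A minimal one below it therefore costs at least
`(d - 2) + 3`, the farthest vertices including `v_0` and the two extra neighbours of `v_1`.
-/

namespace SimpleGraph

variable {V : Type*} {G : SimpleGraph V}

lemma IsAcyclic.length_eq_dist (hG : G.IsAcyclic) {u v : V} {p : G.Walk u v} (hp : p.IsPath) :
    p.length = G.dist u v := by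
  obtain ⟨q, hq, hq_len⟩ := p.reachable.exists_path_of_dist
  have : p = q := congrArg Subtype.val ((hG.subsingleton_path u v).elim ⟨p, hp⟩ ⟨q, hq⟩)
  rw [← hq_len, this]

end SimpleGraph

section Broadcast

variable {V : Type*} [Fintype V] {G : SimpleGraph V}

lemma dist_le_eccent (G : SimpleGraph V) (r x : V) : G.dist r x ≤ _root_.eccent G r :=
  Finset.le_sup (mem_univ x)

lemma SimpleGraph.IsAcyclic.eccent_eq_gDiam_of_isPath (hG : G.IsAcyclic) {x r : V}
    {p : G.Walk x r} (hp : p.IsPath) (hlen : p.length = gDiam G) :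
    _root_.eccent G r = gDiam G := by
  refine le_antisymm (Finset.le_sup (mem_univ r)) ?_
  rw [← hlen, hG.length_eq_dist hp, SimpleGraph.dist_comm]
  exact dist_le_eccent G r x

lemma MinimalDominatingBroadcast.cost_le_upperBroadcast {f : V → ℕ}
    (hf : MinimalDominatingBroadcast G f) : cost f ≤ upperBroadcast G := by
  refine le_csSup ⟨∑ v, _root_.eccent G v, ?_⟩ ⟨f, hf, rfl⟩
  rintro k ⟨g, hg, rfl⟩
  exact Finset.sum_le_sum fun v _ => hg.1 v

lemma exists_minimalDominatingBroadcast_le {f : V → ℕ} (hf : IsBroadcast G f)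
    (hdom : BroadcastDominates G f) : ∃ g ≤ f, MinimalDominatingBroadcast G g := by
  classical
  have hex : ∃ k, ∃ g ≤ f, IsBroadcast G g ∧ BroadcastDominates G g ∧ cost g = k :=
    ⟨_, f, le_rfl, hf, hdom, rfl⟩
  obtain ⟨g, hgf, hg, hgdom, hcost⟩ := Nat.find_spec hex
  refine ⟨g, hgf, hg, hgdom, fun g' hg' hg'g hne hg'dom => ?_⟩
  obtain ⟨-, v, hv⟩ := Pi.lt_def.mp (lt_of_le_of_ne hg'g hne)
  have hlt : cost g' < cost g := Finset.sum_lt_sum (fun i _ => hg'g i) ⟨v, mem_univ v, hv⟩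
  exact Nat.find_min hex (hcost ▸ hlt) ⟨g', hg'g.trans hgf, hg', hg'dom, rfl⟩

lemma le_upperBroadcast_of_forall_le_cost {f : V → ℕ} {k : ℕ} (hf : IsBroadcast G f)
    (hdom : BroadcastDominates G f) (hk : ∀ g ≤ f, BroadcastDominates G g → k ≤ cost g) :
    k ≤ upperBroadcast G := by
  obtain ⟨g, hgf, hg⟩ := exists_minimalDominatingBroadcast_le hf hdom
  exact (hk g hgf hg.2.1).trans hg.cost_le_upperBroadcast

end Broadcast

section Farthest

variable {V : Type*} [Fintype V] {G : SimpleGraph V} {r : V}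

noncomputable def farthest (G : SimpleGraph V) (r : V) : Finset V :=
  univ.filter fun x => G.dist r x = _root_.eccent G r

lemma mem_farthest {x : V} : x ∈ farthest G r ↔ G.dist r x = _root_.eccent G r := by
  simp [farthest]

lemma ne_of_mem_farthest (he : 2 ≤ _root_.eccent G r) {x : V} (hx : x ∈ farthest G r) :
    x ≠ r := by
  rintro rfl
  rw [mem_farthest, SimpleGraph.dist_self] at hx
  omega

lemma mem_farthest_of_isPath (hG : G.IsAcyclic) {x : V} {p : G.Walk x r} (hp : p.IsPath)
    (hlen : p.length = _root_.eccent G r) : x ∈ farthest G r := by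
  rw [mem_farthest, SimpleGraph.dist_comm, ← hG.length_eq_dist hp, hlen]

section

variable [DecidableEq V]

noncomputable def farthestBroadcast (G : SimpleGraph V) (r : V) : V → ℕ :=
  fun v => if v = r then _root_.eccent G r - 1 else if v ∈ farthest G r then 1 else 0

lemma farthestBroadcast_self : farthestBroadcast G r r = _root_.eccent G r - 1 :=
  if_pos rfl

lemma farthestBroadcast_of_mem_farthest (he : 2 ≤ _root_.eccent G r) {x : V}
    (hx : x ∈ farthest G r) : farthestBroadcast G r x = 1 := by
  simp [farthestBroadcast, ne_of_mem_farthest he hx, hx]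

lemma farthestBroadcast_eq_zero {v : V} (hvr : v ≠ r) (hv : v ∉ farthest G r) :
    farthestBroadcast G r v = 0 := by
  simp [farthestBroadcast, hvr, hv]

lemma isBroadcast_farthestBroadcast (he : 2 ≤ _root_.eccent G r) :
    IsBroadcast G (farthestBroadcast G r) := by
  intro v
  by_cases hvr : v = r
  · rw [hvr, farthestBroadcast_self]
    omega
  by_cases hv : v ∈ farthest G r
  · rw [farthestBroadcast_of_mem_farthest he hv]
    have := dist_le_eccent G v r
    rw [SimpleGraph.dist_comm, mem_farthest.mp hv] at this
    omega
  · simp [farthestBroadcast_eq_zero hvr hv]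

lemma broadcastDominates_farthestBroadcast (he : 2 ≤ _root_.eccent G r) :
    BroadcastDominates G (farthestBroadcast G r) := by
  intro u
  by_cases hu : u ∈ farthest G r
  · exact ⟨u, (farthestBroadcast_of_mem_farthest he hu).ge, by simp⟩
  · have hlt : G.dist r u < _root_.eccent G r :=
      (dist_le_eccent G r u).lt_of_ne fun h => hu (mem_farthest.mpr h)
    refine ⟨r, ?_, ?_⟩ <;> rw [farthestBroadcast_self]
    · omega
    · rw [SimpleGraph.dist_comm]
      omega

variable {g : V → ℕ}

lemma apply_eq_one_of_mem_farthest (hT : G.IsTree) (he : 2 ≤ _root_.eccent G r)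
    (hg : g ≤ farthestBroadcast G r) (hdom : BroadcastDominates G g) {x : V}
    (hx : x ∈ farthest G r) : g x = 1 := by
  have hgx : g x ≤ 1 := farthestBroadcast_of_mem_farthest he hx ▸ hg x
  obtain ⟨v, hv, hxv⟩ := hdom x
  have hgv : g v ≤ farthestBroadcast G r v := hg v
  by_cases hvr : v = r
  · subst hvr
    rw [farthestBroadcast_self] at hgv
    rw [SimpleGraph.dist_comm, mem_farthest.mp hx] at hxv
    omega
  by_cases hvx : v = x
  · subst hvx
    omega
  by_cases hvf : v ∈ farthest G r
  · rw [farthestBroadcast_of_mem_farthest he hvf] at hgv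
    have hadj : G.Adj x v := SimpleGraph.dist_eq_one_iff_adj.mp <| by
      have := (hT.connected.dist_eq_zero_iff).not.mpr (Ne.symm hvx)
      omega
    exact absurd ((mem_farthest.mp hx).trans (mem_farthest.mp hvf).symm)
      (hT.dist_ne_of_adj r hadj)
  · rw [farthestBroadcast_eq_zero hvr hvf] at hgv
    omega

lemma dist_le_of_dominates_le_farthestBroadcast (hT : G.IsTree) (hg : g ≤ farthestBroadcast G r)
    (hdom : BroadcastDominates G g) {z : V} (hz : G.dist r z + 2 ≤ _root_.eccent G r) :
    G.dist r z ≤ g r := by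
  obtain ⟨v, hv, hzv⟩ := hdom z
  have hgv : g v ≤ farthestBroadcast G r v := hg v
  by_cases hvr : v = r
  · subst hvr
    rwa [SimpleGraph.dist_comm]
  by_cases hvf : v ∈ farthest G r
  · rw [farthestBroadcast_of_mem_farthest (by omega) hvf] at hgv
    have := hT.connected.dist_triangle (u := r) (v := z) (w := v)
    rw [mem_farthest.mp hvf] at this
    omega
  · rw [farthestBroadcast_eq_zero hvr hvf] at hgv
    omega

lemma le_cost_of_dominates_le_farthestBroadcast (hT : G.IsTree)
    (hg : g ≤ farthestBroadcast G r) (hdom : BroadcastDominates G g) {z : V}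
    (hz : G.dist r z + 2 ≤ _root_.eccent G r) : G.dist r z + #(farthest G r) ≤ cost g := by
  have hr : r ∉ farthest G r := fun h => ne_of_mem_farthest (by omega) h rfl
  calc G.dist r z + #(farthest G r)
      ≤ g r + ∑ x ∈ farthest G r, g x := by
        rw [Finset.sum_congr rfl fun x hx => apply_eq_one_of_mem_farthest hT (by omega) hg hdom hx]
        simpa using dist_le_of_dominates_le_farthestBroadcast hT hg hdom hz
    _ = ∑ v ∈ insert r (farthest G r), g v := (Finset.sum_insert hr).symm
    _ ≤ cost g := Finset.sum_le_sum_of_subset (subset_univ _)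

end

theorem SimpleGraph.IsTree.dist_add_card_farthest_le_upperBroadcast (hT : G.IsTree) {z : V}
    (hz : G.dist r z + 2 ≤ _root_.eccent G r) :
    G.dist r z + #(farthest G r) ≤ upperBroadcast G := by
  classical
  exact le_upperBroadcast_of_forall_le_cost (isBroadcast_farthestBroadcast (by omega))
    (broadcastDominates_farthestBroadcast (by omega))
    fun _ hg hdom => le_cost_of_dominates_le_farthestBroadcast hT hg hdom hz

end Farthest

/-- If `T` is a tree with `diam(T) = d ≥ 2` and a diametral path `v_0, …, v_d`, and the
vertex `v_1` has at least two distinct neighbors off the path, then `Γ_b(T) > diam(T)`. -/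
theorem tree_limb_near_endpoint_not_diametrical {V : Type*} [Fintype V] (T : SimpleGraph V)
    (hT : T.IsTree) (hd : 2 ≤ gDiam T)
    {v0 vd : V} (p : T.Walk v0 vd) (hp : p.IsPath) (hlen : p.length = gDiam T)
    (u1 u2 : V) (hne : u1 ≠ u2)
    (h1 : T.Adj (p.getVert 1) u1) (h2 : T.Adj (p.getVert 1) u2)
    (hu1 : u1 ∉ p.support) (hu2 : u2 ∉ p.support) :
    gDiam T < upperBroadcast T := by
  cases p with
  | nil => simp at hlen; omega
  | @cons _ v1 _ h01 p' =>
    cases p' with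
    | nil => simp at hlen; omega
    | @cons _ v2 _ h12 q =>
      simp only [Walk.getVert_cons_succ, Walk.getVert_zero] at h1 h2
      have hecc := hT.isAcyclic.eccent_eq_gDiam_of_isPath hp hlen
      have hfar : ∀ u, T.Adj v1 u → u ∉ (Walk.cons h01 (Walk.cons h12 q)).support →
          u ∈ farthest T vd := fun u hu hup =>
        have hpath : (Walk.cons hu.symm (Walk.cons h12 q)).IsPath :=
          hp.of_cons.cons fun h => hup (List.mem_cons_of_mem _ h)
        mem_farthest_of_isPath hT.isAcyclic hpath (by simpa [hecc] using hlen)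
      have hcard : 2 < #(farthest T vd) := two_lt_card_iff.mpr ⟨v0, u1, u2,
        mem_farthest_of_isPath hT.isAcyclic hp (hlen.trans hecc.symm), hfar u1 h1 hu1,
        hfar u2 h2 hu2, fun h => hu1 (h ▸ Walk.start_mem_support _),
        fun h => hu2 (h ▸ Walk.start_mem_support _), hne⟩
      have hv2 : T.dist vd v2 + 2 = gDiam T := by
        rw [SimpleGraph.dist_comm, ← hT.isAcyclic.length_eq_dist hp.of_cons.of_cons, ← hlen]
        simp
      have := hT.dist_add_card_farthest_le_upperBroadcast (hv2.trans_le hecc.ge)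
      omega
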